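/- Let g be a nonzero Laurent polynomial over ℚ in the variable q, let ε : ℕ → ℤ take only the values 1 and -1, and let p : ℕ → ℚ[q, q⁻¹] be a sequence of nonzero Laurent polynomials such that for every n ≥ 1, p(n) = -q·p(n-1) + ε(n)·q^(3n)·g. Then there exists a positive integer N such that deg p(N) - deg p(N-1) ≥ 2. -/

import Mathlib

/-!
If every step raised the degree by at most one, `deg p(n)` would stay below `deg p(0) + n`.
Multiplication by `T m` shifts degrees by `m`, so for large `n` the term `±T (3n) * g` has degree
`3n + deg g`, strictly above that of `-T * p(n-1)`; it then fixes `deg p(n) = 3n + deg g`,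
a jump of at least two over `deg p(n-1)`.
-/

open LaurentPolynomial

/-- The degree of a Laurent polynomial: the largest exponent of the variable occurring
with nonzero coefficient (junk value `0` for the zero polynomial). -/
noncomputable def ldeg (f : LaurentPolynomial ℚ) : ℤ :=
  (LaurentPolynomial.degree f).unbotD 0

namespace LaurentPolynomial

variable {R : Type*}

theorem degree_eq_supDegree [Semiring R] (f : R[T;T⁻¹]) :
    f.degree = f.supDegree WithBot.some := by
  rw [degree, Finset.max_eq_sup_withBot]

theorem degree_add_eq_right_of_degree_lt [Semiring R] {f g : R[T;T⁻¹]}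
    (h : f.degree < g.degree) : (f + g).degree = g.degree := by
  simp only [degree_eq_supDegree] at h ⊢
  exact AddMonoidAlgebra.supDegree_add_eq_right h

theorem degree_neg [Ring R] (f : R[T;T⁻¹]) : (-f).degree = f.degree := by
  simp only [degree_eq_supDegree]
  exact AddMonoidAlgebra.supDegree_neg

theorem degree_mul_le [Semiring R] (f g : R[T;T⁻¹]) :
    (f * g).degree ≤ f.degree + g.degree := by
  simp only [degree_eq_supDegree]
  exact AddMonoidAlgebra.supDegree_mul_le fun a b => WithBot.coe_add a b

theorem degree_T_mul [Semiring R] [Nontrivial R] (n : ℤ) (f : R[T;T⁻¹]) :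
    (T n * f).degree = n + f.degree := by
  have hle (m : ℤ) (g : R[T;T⁻¹]) : (T m * g).degree ≤ m + g.degree :=
    (degree_mul_le _ _).trans_eq (by rw [degree_T])
  refine le_antisymm (hle n f) <|
    calc (n : WithBot ℤ) + f.degree = n + (T (-n) * (T n * f)).degree := by
          rw [← mul_assoc, ← T_add, neg_add_cancel, T_zero, one_mul]
      _ ≤ n + (((-n : ℤ) : WithBot ℤ) + (T n * f).degree) := by grw [hle]
      _ = (T n * f).degree := by
          rw [← add_assoc, ← WithBot.coe_add, add_neg_cancel, WithBot.coe_zero, zero_add]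

end LaurentPolynomial

theorem degree_le_ldeg (f : LaurentPolynomial ℚ) : f.degree ≤ ldeg f := by
  cases h : f.degree <;> simp [ldeg, h]

theorem ldeg_eq_of_degree_eq {f : LaurentPolynomial ℚ} {d : ℤ} (h : f.degree = d) :
    ldeg f = d := by
  simp [ldeg, h]

theorem ldeg_neg_T_one_mul_add_zsmul_T_mul {f g : LaurentPolynomial ℚ} {c m d : ℤ}
    (hc : c = 1 ∨ c = -1) (hg : g.degree = d) (hlt : 1 + ldeg f < m + d) :
    ldeg (-(T 1) * f + c • (T m * g)) = m + d := by
  have hsmul : (c • (T m * g)).degree = ↑(m + d) := by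
    rcases hc with rfl | rfl
    · rw [one_smul, degree_T_mul, hg, WithBot.coe_add]
    · rw [neg_one_zsmul, degree_neg, degree_T_mul, hg, WithBot.coe_add]
  apply ldeg_eq_of_degree_eq
  refine (degree_add_eq_right_of_degree_lt ?_).trans hsmul
  rw [hsmul, neg_mul, degree_neg, degree_T_mul]
  calc ((1 : ℤ) : WithBot ℤ) + f.degree ≤ ((1 + ldeg f : ℤ) : WithBot ℤ) := by
        grw [degree_le_ldeg, WithBot.coe_add]
    _ < ↑(m + d) := WithBot.coe_lt_coe.mpr hlt

theorem stmt1_general (g : LaurentPolynomial ℚ) (hg : g ≠ 0)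
    (ε : ℕ → ℤ) (hε : ∀ n, ε n = 1 ∨ ε n = -1)
    (p : ℕ → LaurentPolynomial ℚ)
    (hrec : ∀ n : ℕ, 1 ≤ n → p n = -(T 1) * p (n - 1) + ε n • (T (3 * (n : ℤ)) * g)) :
    ∃ N : ℕ, 0 < N ∧ 2 ≤ ldeg (p N) - ldeg (p (N - 1)) := by
  by_contra! hcon
  obtain ⟨d, hd⟩ : ∃ d : ℤ, g.degree = d :=
    (WithBot.ne_bot_iff_exists.mp (mt degree_eq_bot_iff.mp hg)).imp fun _ => Eq.symm
  have hlin (k : ℕ) : ldeg (p k) ≤ ldeg (p 0) + k := by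
    induction k with
    | zero => simp
    | succ k ih =>
      have := hcon (k + 1) k.succ_pos
      rw [Nat.add_sub_cancel] at this
      push_cast
      omega
  set n := (ldeg (p 0) - d).toNat + 1 with hn
  have hprev := hlin (n - 1)
  have hjump : ldeg (p n) = 3 * n + d := by
    rw [hrec n (by omega)]
    exact ldeg_neg_T_one_mul_add_zsmul_T_mul (hε n) hd (by omega)
  have := hcon n (by omega)
  omega

theorem stmt1 (g : LaurentPolynomial ℚ) (hg : g ≠ 0)
    (ε : ℕ → ℤ) (hε : ∀ n, ε n = 1 ∨ ε n = -1)
    (p : ℕ → LaurentPolynomial ℚ) (hp : ∀ n, p n ≠ 0)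
    (hrec : ∀ n : ℕ, 1 ≤ n → p n = -(T 1) * p (n - 1) + ε n • (T (3 * (n : ℤ)) * g)) :
    ∃ N : ℕ, 0 < N ∧ 2 ≤ ldeg (p N) - ldeg (p (N - 1)) :=
  stmt1_general g hg ε hε p hrec
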